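/- Let s = i·√7 ∈ ℂ (so s² = -7) and let F(w,x,y,z) = w² + (x⁴ + y⁴ + z⁴) - (3/2)·(1 - s)·(x²y² + x²z² + y²z²) over ℂ. If (v,a,b,c) ∈ ℂ⁴ is a point at which all four partial derivatives ∂F/∂w, ∂F/∂x, ∂F/∂y, ∂F/∂z vanish, then v = a = b = c = 0. In other words, the surface F = 0 in the weighted projective space ℙ(2,1,1,1) over ℂ is smooth, i.e. is a smooth del Pezzo surface of degree 2. -/

import Mathlib

/-!
The partial derivatives are `∂F/∂w = 2w` and `∂F/∂x = 4x(x² - t(y² + z²))` with `t = 3(1 - s)/4`,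
and symmetrically in `y`, `z`. So at a critical point `w = 0`, and the squares `A = x²`, `B = y²`,
`C = z²` satisfy `A(A - t(B + C)) = 0` and its two permutations. If exactly two of `A, B, C`
are nonzero they are proportional with ratio `t` both ways, forcing `t = ±1`; if all three are,
subtracting the equations forces `A = B = C` and then `t = 1/2`. Since `s` is not real, `t` is none
of `1, -1, 1/2`, so `A = B = C = 0`.
-/

open Complex

/-- `s = i√7`, a square root of `-7` in `ℂ`. -/
noncomputable def s : ℂ := Complex.I * (Real.sqrt 7 : ℝ)

/-- `F(w,x,y,z) = w² + x⁴+y⁴+z⁴ - (3/2)(1-s)(x²y²+x²z²+y²z²)`. -/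
noncomputable def F (w x y z : ℂ) : ℂ :=
  w ^ 2 + (x ^ 4 + y ^ 4 + z ^ 4)
    - (3 / 2 : ℂ) * (1 - s) * (x ^ 2 * y ^ 2 + x ^ 2 * z ^ 2 + y ^ 2 * z ^ 2)

section CriticalSquares

variable {R : Type*} [CommRing R] [NoZeroDivisors R] {t A B C : R}

theorem eq_zero_of_mul_sub_mul_eq_zero (ht_one : t ≠ 1) (ht_neg : t ≠ -1)
    (hA : A * (A - t * B) = 0) (hB : B * (B - t * A) = 0) : A = 0 ∧ B = 0 := by
  by_cases hA₀ : A = 0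
  · subst hA₀
    simpa using hB
  have hAB : A = t * B := sub_eq_zero.mp ((mul_eq_zero.mp hA).resolve_left hA₀)
  have hB_sq : (1 - t) * (1 + t) * B ^ 2 = 0 := by linear_combination hB + B * t * hAB
  have ht : (1 - t) * (1 + t) ≠ 0 :=
    mul_ne_zero (sub_ne_zero.mpr ht_one.symm) fun h => ht_neg (by linear_combination h)
  have hB₀ : B = 0 := pow_eq_zero_iff two_ne_zero |>.mp ((mul_eq_zero.mp hB_sq).resolve_left ht)
  exact ⟨by rw [hAB, hB₀, mul_zero], hB₀⟩

theorem eq_zero_of_mul_sub_mul_add_eq_zero (ht_one : t ≠ 1) (ht_neg : t ≠ -1)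
    (ht_half : 2 * t ≠ 1)
    (hA : A * (A - t * (B + C)) = 0) (hB : B * (B - t * (A + C)) = 0)
    (hC : C * (C - t * (A + B)) = 0) : A = 0 ∧ B = 0 ∧ C = 0 := by
  by_cases hA₀ : A = 0
  · subst hA₀
    exact ⟨rfl, eq_zero_of_mul_sub_mul_eq_zero (A := B) (B := C) ht_one ht_neg
      (by linear_combination hB) (by linear_combination hC)⟩
  by_cases hB₀ : B = 0
  · subst hB₀
    obtain ⟨hA, hC⟩ := eq_zero_of_mul_sub_mul_eq_zero (A := A) (B := C) ht_one ht_neg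
      (by linear_combination hA) (by linear_combination hC)
    exact ⟨hA, rfl, hC⟩
  by_cases hC₀ : C = 0
  · subst hC₀
    obtain ⟨hA, hB⟩ := eq_zero_of_mul_sub_mul_eq_zero (A := A) (B := B) ht_one ht_neg
      (by linear_combination hA) (by linear_combination hB)
    exact ⟨hA, hB, rfl⟩
  exfalso
  have hA' := (mul_eq_zero.mp hA).resolve_left hA₀
  have hB' := (mul_eq_zero.mp hB).resolve_left hB₀
  have hC' := (mul_eq_zero.mp hC).resolve_left hC₀
  have ht : 1 + t ≠ 0 := fun h => ht_neg (by linear_combination h)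
  have hAB : A = B := by
    have : (1 + t) * (A - B) = 0 := by linear_combination hA' - hB'
    exact sub_eq_zero.mp ((mul_eq_zero.mp this).resolve_left ht)
  have hAC : A = C := by
    have : (1 + t) * (A - C) = 0 := by linear_combination hA' - hC'
    exact sub_eq_zero.mp ((mul_eq_zero.mp this).resolve_left ht)
  have : (1 - 2 * t) * A = 0 := by linear_combination hA' - t * hAB - t * hAC
  exact (mul_eq_zero.mp this).elim (fun h => ht_half (by linear_combination -h)) hA₀

end CriticalSquares

theorem hasDerivAt_biquadratic {𝕜 : Type*} [NontriviallyNormedField 𝕜] (p q a : 𝕜) :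
    HasDerivAt (fun x => x ^ 4 + p * x ^ 2 + q) (4 * a ^ 3 + 2 * p * a) a :=
  (((hasDerivAt_pow 4 a).add ((hasDerivAt_pow 2 a).const_mul p)).add_const q).congr_deriv
    (by norm_num; ring)

theorem s_ne_ofReal (r : ℝ) : s ≠ r := by
  intro h
  simpa [s] using congrArg Complex.im h

theorem F_comm_xy (w x y z : ℂ) : F w x y z = F w y x z := by
  unfold F; ring

theorem F_comm_xz (w x y z : ℂ) : F w x y z = F w z y x := by
  unfold F; ring

theorem deriv_F_w (x y z v : ℂ) : deriv (fun w => F w x y z) v = 2 * v := by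
  simp [F]

theorem deriv_F_x (w y z a : ℂ) :
    deriv (fun x => F w x y z) a = 4 * a * (a ^ 2 - 3 * (1 - s) / 4 * (y ^ 2 + z ^ 2)) := by
  have hF : (fun x => F w x y z) = fun x => x ^ 4 + (-(3 / 2) * (1 - s) * (y ^ 2 + z ^ 2)) * x ^ 2
      + (w ^ 2 + y ^ 4 + z ^ 4 - 3 / 2 * (1 - s) * y ^ 2 * z ^ 2) := by
    funext x; unfold F; ring
  rw [hF, (hasDerivAt_biquadratic _ _ a).deriv]
  ring

theorem deriv_F_y (w x z b : ℂ) :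
    deriv (fun y => F w x y z) b = 4 * b * (b ^ 2 - 3 * (1 - s) / 4 * (x ^ 2 + z ^ 2)) := by
  simp_rw [F_comm_xy w x]
  exact deriv_F_x w x z b

theorem deriv_F_z (w x y c : ℂ) :
    deriv (fun z => F w x y z) c = 4 * c * (c ^ 2 - 3 * (1 - s) / 4 * (x ^ 2 + y ^ 2)) := by
  simp_rw [F_comm_xz w x]
  rw [deriv_F_x, add_comm (y ^ 2)]

/-- The surface `F = 0` in `ℙ(2,1,1,1)` is smooth: the four partial derivatives of `F`
vanish simultaneously only at the origin of `ℂ⁴`. -/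
theorem stmt_9 (v a b c : ℂ)
    (hw : deriv (fun w => F w a b c) v = 0)
    (hx : deriv (fun x => F v x b c) a = 0)
    (hy : deriv (fun y => F v a y c) b = 0)
    (hz : deriv (fun z => F v a b z) c = 0) :
    v = 0 ∧ a = 0 ∧ b = 0 ∧ c = 0 := by
  rw [deriv_F_w] at hw
  rw [deriv_F_x] at hx
  rw [deriv_F_y] at hy
  rw [deriv_F_z] at hz
  set t := 3 * (1 - s) / 4
  have ht_one : t ≠ 1 := fun h =>
    s_ne_ofReal (-1 / 3) (by push_cast; linear_combination -4 / 3 * h)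
  have ht_neg : t ≠ -1 := fun h =>
    s_ne_ofReal (7 / 3) (by push_cast; linear_combination -4 / 3 * h)
  have ht_half : 2 * t ≠ 1 := fun h =>
    s_ne_ofReal (1 / 3) (by push_cast; linear_combination -2 / 3 * h)
  obtain ⟨ha, hb, hc⟩ := eq_zero_of_mul_sub_mul_add_eq_zero (A := a ^ 2) (B := b ^ 2) (C := c ^ 2)
    ht_one ht_neg ht_half
    (by linear_combination a / 4 * hx) (by linear_combination b / 4 * hy)
    (by linear_combination c / 4 * hz)
  exact ⟨by linear_combination hw / 2, pow_eq_zero_iff two_ne_zero |>.mp ha,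
    pow_eq_zero_iff two_ne_zero |>.mp hb, pow_eq_zero_iff two_ne_zero |>.mp hc⟩
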